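/- Let K be a complete discretely valued field (of characteristic 0 or p) with perfect residue field of characteristic p, and let L/K be a finite, totally ramified, Galois p-extension of degree p^n. Let π_L be a uniformizer of L with minimal polynomial p(x) over K. Then v_L(p'(π_L)) + 1 ≡ p^n·u_m − b_m (mod p^n), where b_m and u_m denote the largest ramification break numbers of L/K in the lower and upper numbering respectively. -/

import Mathlib

/-- A normalized discrete valuation on a field `F` : an integer-valued function
(its value at `0` is irrelevant), additive on products of nonzero elements,
satisfying the ultrametric inequality, and attaining the value `1`
(so `v (Fˣ) = ℤ`, i.e. it is normalized). -/
structure NormDiscVal (F : Type*) [Field F] where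
  v : F → ℤ
  v_mul : ∀ x y : F, x ≠ 0 → y ≠ 0 → v (x * y) = v x + v y
  v_add : ∀ x y : F, x ≠ 0 → y ≠ 0 → x + y ≠ 0 → min (v x) (v y) ≤ v (x + y)
  exists_uniformizer : ∃ π : F, π ≠ 0 ∧ v π = 1

namespace NormDiscVal

variable {F : Type*} [Field F]

/-- `x` belongs to the fractional ideal `𝔓^j = {x | v x ≥ j}` (and `0` belongs to all). -/
def memP (w : NormDiscVal F) (j : ℤ) (x : F) : Prop := x = 0 ∨ j ≤ w.v x

/-- `F` is complete with respect to the valuation `w` :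
every Cauchy sequence (for the valuation) has a limit. -/
def IsComplete (w : NormDiscVal F) : Prop :=
  ∀ a : ℕ → F,
    (∀ N : ℤ, ∃ M : ℕ, ∀ m k : ℕ, M ≤ m → M ≤ k → w.memP N (a m - a k)) →
    ∃ l : F, ∀ N : ℤ, ∃ M : ℕ, ∀ m : ℕ, M ≤ m → w.memP N (a m - l)

/-- The residue field of `w` has characteristic `p` and is perfect :
`p` vanishes in the residue field and the Frobenius is surjective on it. -/
def PerfectResidueCharP (w : NormDiscVal F) (p : ℕ) : Prop :=
  w.memP 1 (p : F) ∧
    ∀ x : F, w.memP 0 x → ∃ y : F, w.memP 0 y ∧ w.memP 1 (x - y ^ p)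

end NormDiscVal

open Polynomial

/-- The `i`-th ramification group (lower numbering) of the totally ramified
Galois extension `L/K`, computed with respect to the uniformizer `πL`:
`G_i = {σ | v_L(σ πL − πL) ≥ i + 1}`. -/
def ramGrp (K : Type*) {L : Type*} [Field K] [Field L] [Algebra K L]
    (vL : NormDiscVal L) (πL : L) (i : ℤ) : Set (L ≃ₐ[K] L) :=
  {σ | σ πL = πL ∨ i + 1 ≤ vL.v (σ πL - πL)}

/-- `i` is a ramification break number (lower numbering): `G_{i+1} ⊊ G_i`. -/
def IsRamBreak (K : Type*) {L : Type*} [Field K] [Field L] [Algebra K L]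
    (vL : NormDiscVal L) (πL : L) (i : ℤ) : Prop :=
  ramGrp K vL πL (i + 1) ⊂ ramGrp K vL πL i

/-- The Herbrand function `φ_{L/K}` evaluated at an integer `b ≥ 0`:
`φ(b) = (1/|G₀|) · ∑_{i=1}^{b} |G_i|`. -/
noncomputable def herbrandPhi (K : Type*) {L : Type*} [Field K] [Field L] [Algebra K L]
    (vL : NormDiscVal L) (πL : L) (b : ℤ) : ℚ :=
  (∑ i ∈ Finset.Icc (1 : ℤ) b, (Nat.card ↥(ramGrp K vL πL i) : ℚ)) /
    (Nat.card ↥(ramGrp K vL πL 0) : ℚ)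


/-!
Write `P = ∑ cᵢ Xⁱ` for the minimal polynomial of `π_L`. Since `v_L` restricts to `[L:K] • v_K`
on `K`, the nonzero terms of `P(π_L) = 0` have valuations `v_L(cᵢ π_Lⁱ) = [L:K] • v_K(cᵢ) + i`. The minimum must be attained twice, and for `0 ≤ i ≤ [L:K]`
these values can only coincide at `i = 0` and `i = [L:K]`: so `P` has degree `[L:K]` and is
Eisenstein. Hence `π_L` generates `L`, all its conjugates lie in the maximal ideal, and
`P'(π_L) = ∏_{σ ≠ 1} (π_L - σ π_L)`, i.e. `d = ∑_{σ ≠ 1} i(σ)` with `i(σ) = v_L(σ π_L - π_L)`.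
As `1 ≤ i(σ) ≤ b_m + 1`, counting the pairs `(σ, i)` with `1 ≤ i < i(σ)` gives Hilbert's formula
`[L:K] • φ(b_m) = b_m + d + 1 - [L:K]`, so the congruence holds with quotient `1`.
-/

open Finset Module IntermediateField

namespace NormDiscVal

variable {F : Type*} [Field F] (w : NormDiscVal F)

lemma v_one : w.v 1 = 0 := by
  have := w.v_mul 1 1 one_ne_zero one_ne_zero
  rw [mul_one] at this
  omega

lemma v_neg {x : F} (hx : x ≠ 0) : w.v (-x) = w.v x := by
  have hm1 : w.v (-1 : F) = 0 := by
    have := w.v_mul (-1 : F) (-1) (by norm_num) (by norm_num)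
    rw [neg_mul_neg, one_mul, w.v_one] at this
    omega
  rw [← neg_one_mul, w.v_mul _ _ (by norm_num) hx, hm1, zero_add]

lemma v_sub_comm {x y : F} (h : x ≠ y) : w.v (x - y) = w.v (y - x) := by
  rw [← neg_sub, w.v_neg (sub_ne_zero.mpr h.symm)]

lemma v_pow {x : F} (hx : x ≠ 0) (k : ℕ) : w.v (x ^ k) = k * w.v x := by
  induction k with
  | zero => simpa using w.v_one
  | succ k ih =>
    rw [pow_succ, w.v_mul _ _ (pow_ne_zero _ hx) hx, ih]
    push_cast
    ring

lemma v_prod {ι : Type*} (s : Finset ι) {g : ι → F} (h : ∀ i ∈ s, g i ≠ 0) :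
    w.v (∏ i ∈ s, g i) = ∑ i ∈ s, w.v (g i) := by
  classical
  induction s using Finset.induction with
  | empty => simpa using w.v_one
  | insert a s ha ih =>
    have hs : ∀ i ∈ s, g i ≠ 0 := fun i hi => h i (mem_insert_of_mem hi)
    rw [prod_insert ha, sum_insert ha,
      w.v_mul _ _ (h a (mem_insert_self a s)) (prod_ne_zero_iff.mpr hs), ih hs]

lemma memP_iff {j : ℤ} {x : F} (hx : x ≠ 0) : w.memP j x ↔ j ≤ w.v x :=
  or_iff_right hx

lemma memP_neg {j : ℤ} {x : F} (h : w.memP j x) : w.memP j (-x) := by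
  rcases eq_or_ne x 0 with rfl | hx
  · exact Or.inl neg_zero
  · rwa [w.memP_iff (neg_ne_zero.mpr hx), w.v_neg hx, ← w.memP_iff hx]

lemma memP_add {j : ℤ} {x y : F} (hx : w.memP j x) (hy : w.memP j y) : w.memP j (x + y) := by
  rcases eq_or_ne x 0 with rfl | hx0
  · rwa [zero_add]
  rcases eq_or_ne y 0 with rfl | hy0
  · rwa [add_zero]
  rcases eq_or_ne (x + y) 0 with h0 | h0
  · exact Or.inl h0
  rw [w.memP_iff hx0] at hx
  rw [w.memP_iff hy0] at hy
  exact Or.inr ((le_min hx hy).trans (w.v_add x y hx0 hy0 h0))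

lemma memP_sub {j : ℤ} {x y : F} (hx : w.memP j x) (hy : w.memP j y) : w.memP j (x - y) := by
  rw [sub_eq_add_neg]
  exact w.memP_add hx (w.memP_neg hy)

lemma memP_sum {ι : Type*} (s : Finset ι) {g : ι → F} {j : ℤ} (h : ∀ i ∈ s, w.memP j (g i)) :
    w.memP j (∑ i ∈ s, g i) := by
  classical
  induction s using Finset.induction with
  | empty => exact Or.inl sum_empty
  | insert a s ha ih =>
    rw [sum_insert ha]
    exact w.memP_add (h a (mem_insert_self a s)) (ih fun i hi => h i (mem_insert_of_mem hi))

lemma exists_ne_v_eq_of_sum_eq_zero {ι : Type*} {s : Finset ι} {g : ι → F}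
    (hsum : ∑ i ∈ s, g i = 0) {i₀ : ι} (hi₀ : i₀ ∈ s) (hg₀ : g i₀ ≠ 0)
    (hmin : ∀ i ∈ s, g i ≠ 0 → w.v (g i₀) ≤ w.v (g i)) :
    ∃ j ∈ s, j ≠ i₀ ∧ g j ≠ 0 ∧ w.v (g j) = w.v (g i₀) := by
  classical
  by_contra! hne
  have hrest : w.memP (w.v (g i₀) + 1) (∑ i ∈ s.erase i₀, g i) :=
    w.memP_sum _ fun i hi => by
      obtain ⟨hi₀', hi⟩ := mem_erase.mp hi
      rcases eq_or_ne (g i) 0 with hgi | hgi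
      · exact Or.inl hgi
      · exact Or.inr (lt_of_le_of_ne (hmin i hi hgi) (hne i hi hi₀' hgi).symm)
  have hg₀_eq : g i₀ = -∑ i ∈ s.erase i₀, g i := by
    rw [← add_sum_erase s g hi₀] at hsum
    linear_combination hsum
  have := w.memP_neg hrest
  rw [← hg₀_eq, w.memP_iff hg₀] at this
  omega

lemma one_le_v_of_pow_eq_sum {r : F} (hr : r ≠ 0) {N : ℕ} {a : ℕ → F}
    (ha : ∀ i < N, w.memP 1 (a i)) (h : r ^ N = ∑ i ∈ range N, a i * r ^ i) : 1 ≤ w.v r := by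
  by_contra! hv
  have hsum : w.memP (1 + N * w.v r) (∑ i ∈ range N, a i * r ^ i) :=
    w.memP_sum _ fun i hi => by
      have hiN := mem_range.mp hi
      rcases eq_or_ne (a i) 0 with h0 | h0
      · exact Or.inl (by rw [h0, zero_mul])
      have hai := (w.memP_iff h0).mp (ha i hiN)
      refine Or.inr ?_
      rw [w.v_mul _ _ h0 (pow_ne_zero _ hr), w.v_pow hr]
      have : (i : ℤ) < N := by exact_mod_cast hiN
      nlinarith
  rw [← h, w.memP_iff (pow_ne_zero _ hr), w.v_pow hr] at hsum
  omega

end NormDiscVal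

lemma eq_zero_and_eq_or_of_dvd_sub {e i j : ℕ} (hi : i ≤ e) (hj : j ≤ e) (hij : i ≠ j)
    (h : (e : ℤ) ∣ (j : ℤ) - i) : i = 0 ∧ j = e ∨ i = e ∧ j = 0 := by
  obtain ⟨k, hk⟩ := h
  rcases lt_trichotomy k 0 with hk0 | rfl | hk0
  · have : (e : ℤ) * k ≤ -e := by nlinarith
    omega
  · omega
  · have : (e : ℤ) ≤ e * k := by nlinarith
    omega

section Extension

variable {K L : Type*} [Field K] [Field L] [Algebra K L]

/-- The ramification index of `L/K` is its degree. -/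
def IsTotallyRamified (vK : NormDiscVal K) (vL : NormDiscVal L) : Prop :=
  ∀ x : K, x ≠ 0 → vL.v (algebraMap K L x) = finrank K L * vK.v x

namespace IsTotallyRamified

variable {vK : NormDiscVal K} {vL : NormDiscVal L}

lemma v_algebraMap_mul_pow (hram : IsTotallyRamified vK vL) {c : K} (hc : c ≠ 0)
    {r : L} (hr : r ≠ 0) (i : ℕ) :
    vL.v (algebraMap K L c * r ^ i) = finrank K L * vK.v c + i * vL.v r := by
  rw [vL.v_mul _ _ ((algebraMap K L).injective.ne_iff' (map_zero _) |>.mpr hc)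
    (pow_ne_zero _ hr), hram c hc, vL.v_pow hr]

variable [FiniteDimensional K L]

lemma memP_one_algebraMap (hram : IsTotallyRamified vK vL) {c : K}
    (hc : vK.memP 1 c) : vL.memP 1 (algebraMap K L c) := by
  rcases eq_or_ne c 0 with rfl | hc0
  · exact Or.inl (map_zero _)
  have hfc : algebraMap K L c ≠ 0 := (algebraMap K L).injective.ne_iff' (map_zero _) |>.mpr hc0
  rw [vL.memP_iff hfc, hram c hc0]
  have := (vK.memP_iff hc0).mp hc
  have : (1 : ℤ) ≤ finrank K L := by exact_mod_cast finrank_pos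
  nlinarith

theorem minpoly_isEisenstein (hram : IsTotallyRamified vK vL) {π : L} (hπ0 : π ≠ 0)
    (hπ : vL.v π = 1) :
    (minpoly K π).natDegree = finrank K L ∧
      ∀ i < finrank K L, vK.memP 1 ((minpoly K π).coeff i) := by
  classical
  set P := minpoly K π
  set e := finrank K L
  have hmonic : P.Monic := minpoly.monic (IsIntegral.of_finite K π)
  let term : ℕ → L := fun i => algebraMap K L (P.coeff i) * π ^ i
  have hcoeff_ne : ∀ {i}, term i ≠ 0 → P.coeff i ≠ 0 := fun h hc => h (by simp [term, hc])
  have hterm_ne : ∀ {i}, P.coeff i ≠ 0 → term i ≠ 0 := fun hc =>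
    mul_ne_zero ((algebraMap K L).injective.ne_iff' (map_zero _) |>.mpr hc) (pow_ne_zero _ hπ0)
  have hv_term : ∀ {i}, P.coeff i ≠ 0 → vL.v (term i) = e * vK.v (P.coeff i) + i := fun hc => by
    rw [hram.v_algebraMap_mul_pow hc hπ0, hπ, mul_one]
  have hv_top : vL.v (term P.natDegree) = P.natDegree := by
    rw [hv_term (by simp [hmonic.coeff_natDegree]), hmonic.coeff_natDegree, vK.v_one, mul_zero,
      zero_add]
  have hsum : ∑ i ∈ range (P.natDegree + 1), term i = 0 := by
    rw [← minpoly.aeval K π, aeval_eq_sum_range]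
    simp only [Algebra.smul_def, term, P]
  have hS : (range (P.natDegree + 1)).filter (fun i => P.coeff i ≠ 0) |>.Nonempty :=
    ⟨P.natDegree, by simp [hmonic.coeff_natDegree]⟩
  obtain ⟨i₀, hi₀, hmin⟩ := exists_min_image _ (fun i => vL.v (term i)) hS
  rw [mem_filter, mem_range] at hi₀
  obtain ⟨j, hj, hji, hj0, hvj⟩ := vL.exists_ne_v_eq_of_sum_eq_zero hsum
    (mem_range.mpr hi₀.1) (hterm_ne hi₀.2)
    fun i hi hi0 => hmin i (mem_filter.mpr ⟨hi, hcoeff_ne hi0⟩)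
  rw [mem_range] at hj
  have hdeg_le : P.natDegree ≤ e := minpoly.natDegree_le π
  have hends : i₀ = 0 ∧ j = e ∨ i₀ = e ∧ j = 0 := by
    rw [hv_term (hcoeff_ne hj0), hv_term hi₀.2] at hvj
    exact eq_zero_and_eq_or_of_dvd_sub (by omega) (by omega) hji.symm
      ⟨vK.v (P.coeff i₀) - vK.v (P.coeff j), by linarith⟩
  have hdeg : P.natDegree = e := by omega
  have hv_min : vL.v (term i₀) = e := by
    rcases hends with ⟨rfl, rfl⟩ | ⟨rfl, -⟩
    · rw [← hvj, ← hdeg, hv_top]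
    · rw [← hdeg, hv_top]
  refine ⟨hdeg, fun i hi => ?_⟩
  rcases eq_or_ne (P.coeff i) 0 with hc | hc
  · exact Or.inl hc
  have := hmin i (mem_filter.mpr ⟨mem_range.mpr (by omega), hc⟩)
  rw [hv_min, hv_term hc] at this
  have hi' : (i : ℤ) < e := by exact_mod_cast hi
  exact Or.inr (by nlinarith)

lemma one_le_v_of_aeval_minpoly (hram : IsTotallyRamified vK vL) {π : L} (hπ0 : π ≠ 0)
    (hπ : vL.v π = 1) {r : L} (hr0 : r ≠ 0) (hr : aeval r (minpoly K π) = 0) : 1 ≤ vL.v r := by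
  obtain ⟨hdeg, heis⟩ := hram.minpoly_isEisenstein hπ0 hπ
  have hmonic : (minpoly K π).Monic := minpoly.monic (IsIntegral.of_finite K π)
  refine vL.one_le_v_of_pow_eq_sum hr0
    (N := (minpoly K π).natDegree) (a := fun i => -algebraMap K L ((minpoly K π).coeff i))
    (fun i hi => ?_) ?_
  · exact vL.memP_neg (hram.memP_one_algebraMap (heis i (hdeg ▸ hi)))
  · rw [hmonic.as_sum] at hr
    simp only [map_add, map_pow, aeval_X, map_sum, map_mul, aeval_C] at hr
    simp only [neg_mul, sum_neg_distrib]
    linear_combination hr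

end IsTotallyRamified

section Galois

variable [FiniteDimensional K L] {π : L}

lemma injective_apply_of_adjoin_eq_top (hπ : K⟮π⟯ = ⊤) :
    Function.Injective fun σ : L ≃ₐ[K] L => σ π := by
  have hadj : Algebra.adjoin K {π} = ⊤ := by
    rw [← adjoin_simple_toSubalgebra_of_isAlgebraic (Algebra.IsAlgebraic.isAlgebraic π), hπ,
      top_toSubalgebra]
  exact fun σ τ h => AlgEquiv.coe_toAlgHom_injective
    (AlgHom.ext_of_adjoin_eq_top hadj (Set.eqOn_singleton.mpr h))

lemma aroots_minpoly_eq_map_univ [IsGalois K L] (hπ : K⟮π⟯ = ⊤) :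
    (minpoly K π).aroots L = univ.val.map fun σ : L ≃ₐ[K] L => σ π := by
  have hP : minpoly K π ≠ 0 := minpoly.ne_zero (IsIntegral.of_finite K π)
  symm
  refine Multiset.eq_of_le_of_card_le ?_ ?_
  · refine (Multiset.le_iff_subset (univ.nodup.map (injective_apply_of_adjoin_eq_top hπ))).mpr
      fun x hx => ?_
    obtain ⟨σ, -, rfl⟩ := Multiset.mem_map.mp hx
    rw [mem_aroots, aeval_algHom_apply, minpoly.aeval, map_zero]
    exact ⟨hP, rfl⟩
  · rw [Multiset.card_map, card_val, card_univ, ← Nat.card_eq_fintype_card,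
      IsGalois.card_aut_eq_finrank, ← (Field.primitive_element_iff_minpoly_natDegree_eq K π).mp hπ,
      ← natDegree_map (algebraMap K L)]
    exact card_roots' _

lemma aeval_derivative_minpoly_eq_prod [IsGalois K L] [DecidableEq (L ≃ₐ[K] L)]
    (hπ : K⟮π⟯ = ⊤) :
    aeval π (derivative (minpoly K π)) = ∏ σ ∈ univ.erase (1 : L ≃ₐ[K] L), (π - σ π) := by
  classical
  have hmonic : ((minpoly K π).map (algebraMap K L)).Monic :=
    (minpoly.monic (IsIntegral.of_finite K π)).map _
  have hroots := aroots_minpoly_eq_map_univ hπ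
  rw [aroots] at hroots
  have hsplit : (((minpoly K π).map (algebraMap K L)).roots.map fun a => X - C a).prod =
      (minpoly K π).map (algebraMap K L) := by
    refine prod_multiset_X_sub_C_of_monic_of_roots_card_eq hmonic ?_
    rw [hroots, Multiset.card_map, card_val, card_univ, ← Nat.card_eq_fintype_card,
      IsGalois.card_aut_eq_finrank, natDegree_map,
      (Field.primitive_element_iff_minpoly_natDegree_eq K π).mp hπ]
  have hπ_mem : π ∈ univ.val.map fun σ : L ≃ₐ[K] L => σ π :=
    Multiset.mem_map.mpr ⟨1, mem_univ _, rfl⟩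
  have herase : (univ.val.map fun σ : L ≃ₐ[K] L => σ π).erase π =
      (univ.erase (1 : L ≃ₐ[K] L)).val.map fun σ => σ π := by
    rw [erase_val, Multiset.map_erase _ (injective_apply_of_adjoin_eq_top hπ)]
    rfl
  rw [aeval_def, ← eval_map, ← derivative_map, ← hsplit, hroots,
    eval_multiset_prod_X_sub_C_derivative hπ_mem, herase, Multiset.map_map]
  rfl

end Galois

lemma sum_Icc_card_filter_add_one_le {ι : Type*} (s : Finset ι) (g : ι → ℤ) {b : ℤ}
    (hg : ∀ t ∈ s, 1 ≤ g t ∧ g t ≤ b + 1) :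
    ∑ i ∈ Icc 1 b, (#{t ∈ s | i + 1 ≤ g t} : ℤ) = ∑ t ∈ s, (g t - 1) := by
  simp_rw [natCast_card_filter]
  rw [sum_comm]
  refine sum_congr rfl fun t ht => ?_
  have hfilter : {i ∈ Icc 1 b | i + 1 ≤ g t} = Icc 1 (g t - 1) := by
    ext i
    simp only [mem_filter, mem_Icc]
    have := hg t ht
    omega
  rw [sum_boole, hfilter, Int.card_Icc_of_le _ _ (by have := hg t ht; omega)]
  ring

section Ramification

variable {vL : NormDiscVal L} {π : L}

lemma ramGrp_antitone : Antitone (ramGrp K vL π) :=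
  fun _ _ hij _ hσ => hσ.imp_right (le_trans (by omega))

lemma isRamBreak_v_apply_sub_self_sub_one {σ : L ≃ₐ[K] L} (hσ : σ π ≠ π) :
    IsRamBreak K vL π (vL.v (σ π - π) - 1) := by
  refine ssubset_of_subset_of_ne (ramGrp_antitone (by omega)) fun h => ?_
  have hmem : σ ∈ ramGrp K vL π (vL.v (σ π - π) - 1) := Or.inr (by omega)
  rw [← h] at hmem
  rcases hmem with h' | h'
  · exact hσ h'
  · omega

lemma exists_v_apply_sub_self_eq_of_isRamBreak {i : ℤ} (h : IsRamBreak K vL π i) :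
    ∃ σ : L ≃ₐ[K] L, σ π ≠ π ∧ vL.v (σ π - π) = i + 1 := by
  obtain ⟨σ, hσi, hσi'⟩ := Set.exists_of_ssubset h
  simp only [ramGrp, Set.mem_ofPred_eq, not_or] at hσi hσi'
  exact ⟨σ, hσi'.1, by have := hσi.resolve_left hσi'.1; omega⟩

variable [FiniteDimensional K L]

lemma card_ramGrp_zero [IsGalois K L] (h : ∀ σ : L ≃ₐ[K] L, σ π ≠ π → 1 ≤ vL.v (σ π - π)) :
    Nat.card (ramGrp K vL π 0) = finrank K L := by
  have : ramGrp K vL π 0 = Set.univ :=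
    Set.eq_univ_of_forall fun σ => (em (σ π = π)).imp_right fun hσ => by simpa using h σ hσ
  rw [this, Nat.card_univ, IsGalois.card_aut_eq_finrank]

variable [DecidableEq (L ≃ₐ[K] L)]

lemma card_ramGrp (hinj : Function.Injective fun σ : L ≃ₐ[K] L => σ π) (i : ℤ) :
    Nat.card (ramGrp K vL π i) =
      #{σ ∈ univ.erase (1 : L ≃ₐ[K] L) | i + 1 ≤ vL.v (σ π - π)} + 1 := by
  have hfix : ∀ σ : L ≃ₐ[K] L, σ π = π ↔ σ = 1 := fun σ => hinj.eq_iff (b := 1)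
  have hset : ramGrp K vL π i =
      ↑(insert 1 {σ ∈ univ.erase (1 : L ≃ₐ[K] L) | i + 1 ≤ vL.v (σ π - π)}) := by
    ext σ
    simp only [ramGrp, hfix, Set.mem_ofPred_eq, coe_insert, Set.mem_insert_iff, mem_coe,
      mem_filter, mem_erase, mem_univ, and_true]
    tauto
  rw [hset, Nat.card_coe_set_eq, Set.ncard_coe_finset, card_insert_of_notMem (by simp)]

lemma sum_card_ramGrp (hinj : Function.Injective fun σ : L ≃ₐ[K] L => σ π) {b : ℤ}
    (hb : 0 ≤ b)
    (hbound : ∀ σ ∈ univ.erase (1 : L ≃ₐ[K] L), 1 ≤ vL.v (σ π - π) ∧ vL.v (σ π - π) ≤ b + 1) :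
    ∑ i ∈ Icc 1 b, (Nat.card (ramGrp K vL π i) : ℤ) =
      b + ∑ σ ∈ univ.erase (1 : L ≃ₐ[K] L), (vL.v (σ π - π) - 1) := by
  simp_rw [card_ramGrp hinj]
  push_cast
  rw [sum_add_distrib, sum_Icc_card_filter_add_one_le _ _ hbound, sum_const, nsmul_one,
    Int.card_Icc_of_le _ _ (by omega)]
  ring

end Ramification

namespace IsTotallyRamified

variable {vK : NormDiscVal K} {vL : NormDiscVal L} [FiniteDimensional K L] {π : L}

lemma one_le_v_apply_sub_self (hram : IsTotallyRamified vK vL) (hπ0 : π ≠ 0) (hπ : vL.v π = 1)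
    {σ : L ≃ₐ[K] L} (hσ : σ π ≠ π) : 1 ≤ vL.v (σ π - π) := by
  have hσπ : 1 ≤ vL.v (σ π) := hram.one_le_v_of_aeval_minpoly hπ0 hπ
    ((map_ne_zero_iff σ σ.injective).mpr hπ0) (by rw [aeval_algHom_apply, minpoly.aeval, map_zero])
  rw [← vL.memP_iff (sub_ne_zero.mpr hσ)]
  exact vL.memP_sub (Or.inr hσπ) (Or.inr hπ.ge)

theorem finrank_mul_herbrandPhi_eq [IsGalois K L] (hram : IsTotallyRamified vK vL)
    (hπ0 : π ≠ 0) (hπ : vL.v π = 1) {bm : ℤ} (hbm : IsRamBreak K vL π bm)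
    (hmax : ∀ i, IsRamBreak K vL π i → i ≤ bm) :
    (finrank K L : ℚ) * herbrandPhi K vL π bm =
      bm + vL.v (aeval π (derivative (minpoly K π))) + 1 - finrank K L := by
  classical
  have hadj : K⟮π⟯ = ⊤ := (Field.primitive_element_iff_minpoly_natDegree_eq K π).mpr
    (hram.minpoly_isEisenstein hπ0 hπ).1
  have hinj := injective_apply_of_adjoin_eq_top hadj
  have hfix : ∀ σ ∈ univ.erase (1 : L ≃ₐ[K] L), σ π ≠ π := fun σ hσ h =>
    ne_of_mem_erase hσ (hinj (by simpa using h))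
  have hpos : ∀ σ : L ≃ₐ[K] L, σ π ≠ π → 1 ≤ vL.v (σ π - π) := fun σ =>
    hram.one_le_v_apply_sub_self hπ0 hπ
  have hbm0 : 0 ≤ bm := by
    obtain ⟨σ, hσ, hv⟩ := exists_v_apply_sub_self_eq_of_isRamBreak hbm
    have := hpos σ hσ
    omega
  have hsum := sum_card_ramGrp hinj hbm0 fun σ hσ =>
    ⟨hpos σ (hfix σ hσ), by have := hmax _ (isRamBreak_v_apply_sub_self_sub_one (hfix σ hσ)); omega⟩
  have hdiff : vL.v (aeval π (derivative (minpoly K π))) =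
      ∑ σ ∈ univ.erase (1 : L ≃ₐ[K] L), vL.v (σ π - π) := by
    rw [aeval_derivative_minpoly_eq_prod hadj,
      vL.v_prod _ fun σ hσ => sub_ne_zero.mpr (hfix σ hσ).symm]
    exact sum_congr rfl fun σ hσ => vL.v_sub_comm (hfix σ hσ).symm
  have hcard : #(univ.erase (1 : L ≃ₐ[K] L)) + 1 = finrank K L := by
    rw [card_erase_add_one (mem_univ 1), card_univ, ← Nat.card_eq_fintype_card,
      IsGalois.card_aut_eq_finrank]
  rw [sum_sub_distrib, ← hdiff, sum_const, nsmul_one] at hsum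
  have hN : (finrank K L : ℚ) ≠ 0 := by exact_mod_cast finrank_pos.ne'
  rw [herbrandPhi, card_ramGrp_zero hpos, mul_div_cancel₀ _ hN, ← hcard]
  push_cast
  exact_mod_cast hsum.trans (by push_cast; ring)

end IsTotallyRamified

end Extension

theorem different_congruent_upper_lower_breaks_general
    {p : ℕ} {K L : Type*} [Field K] [Field L] [Algebra K L]
    (vK : NormDiscVal K)
    [FiniteDimensional K L] [IsGalois K L]
    (n : ℕ) (hdeg : Module.finrank K L = p ^ n)
    (vL : NormDiscVal L)
    (htotram : ∀ x : K, x ≠ 0 → vL.v (algebraMap K L x) = (p ^ n : ℤ) * vK.v x)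
    (πL : L) (hπL : πL ≠ 0 ∧ vL.v πL = 1)
    (d : ℤ) (hd : d = vL.v (aeval πL (derivative (minpoly K πL))))
    (bm : ℤ) (hbm : IsRamBreak K vL πL bm ∧ ∀ i : ℤ, IsRamBreak K vL πL i → i ≤ bm) :
    ∃ t : ℤ,
      ((d + 1 : ℤ) : ℚ) - (((p : ℚ) ^ n) * herbrandPhi K vL πL bm - (bm : ℚ)) =
        ((p : ℚ) ^ n) * (t : ℚ) := by
  have hram : IsTotallyRamified vK vL := fun x hx => by
    rw [htotram x hx, hdeg, Nat.cast_pow]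
  have hilbert := hram.finrank_mul_herbrandPhi_eq hπL.1 hπL.2 hbm.1 hbm.2
  rw [hdeg, ← hd, Nat.cast_pow] at hilbert
  refine ⟨1, ?_⟩
  rw [hilbert]
  push_cast
  ring

/-- **The different and the largest ramification break.**  Let `K` be a
complete discretely valued field (characteristic `0` or `p`) with perfect
residue field of characteristic `p`, and `L/K` a finite, totally ramified,
Galois `p`-extension of degree `p ^ n`.  With `bm` the largest lower
ramification break and `u_m = φ(bm)` the largest upper break, one has
`v_L(p'(πL)) + 1 ≡ p ^ n · u_m − bm (mod p ^ n)`
(the congruence is witnessed by an integer `t`). -/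
theorem different_congruent_upper_lower_breaks
    {p : ℕ} (hp : p.Prime) {K L : Type*} [Field K] [Field L] [Algebra K L]
    (hchar : ringChar K = 0 ∨ ringChar K = p)
    (vK : NormDiscVal K) (hKcompl : vK.IsComplete)
    (hKres : vK.PerfectResidueCharP p)
    [FiniteDimensional K L] [IsGalois K L]
    (n : ℕ) (hdeg : Module.finrank K L = p ^ n)
    (vL : NormDiscVal L)
    (htotram : ∀ x : K, x ≠ 0 → vL.v (algebraMap K L x) = (p ^ n : ℤ) * vK.v x)
    (πL : L) (hπL : πL ≠ 0 ∧ vL.v πL = 1)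
    (d : ℤ) (hd : d = vL.v (aeval πL (derivative (minpoly K πL))))
    (bm : ℤ) (hbm : IsRamBreak K vL πL bm ∧ ∀ i : ℤ, IsRamBreak K vL πL i → i ≤ bm) :
    ∃ t : ℤ,
      ((d + 1 : ℤ) : ℚ) - (((p : ℚ) ^ n) * herbrandPhi K vL πL bm - (bm : ℚ)) =
        ((p : ℚ) ^ n) * (t : ℚ) :=
  different_congruent_upper_lower_breaks_general vK n hdeg vL htotram πL hπL d hd bm hbm
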